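/- arXiv:2010.15699 — 6 statements merged into one kernel-verified Lean document; each statement's English description precedes it below -/
import Mathlib

section
/- Let V be a finite-dimensional real inner product space and T : V → V a linear map. (a) If T is positive, then I + T is invertible and the Cayley transform 𝒞(T) = (I − T) ∘ (I + T)⁻¹ satisfies ‖𝒞(T)‖ < 1 in the operator norm. (b) Conversely, if I + T is invertible and ‖𝒞(T)‖ < 1, then T is positive. -/
/-! The Cayley transform maps `(I + T) x` to `(I - T) x`, and the polarization identity
`‖x + T x‖² - ‖x - T x‖² = 4 ⟪T x, x⟫` shows that this shortens every nonzero vector exactly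
when `T` is positive. In finite dimension the unit sphere is compact, so a map that shortens
every nonzero vector has operator norm `< 1`; positivity also makes `I + T` injective, hence
invertible. -/

open scoped RealInnerProductSpace

/-- The Cayley transform `𝒞(T) = (I − T) ∘ (I + T)⁻¹` of a (continuous) linear map `T` on a
finite-dimensional real inner product space, where the inverse is `Ring.inverse`
(junk value `0` if `I + T` is not invertible). -/
noncomputable def cayley {V : Type*} [NormedAddCommGroup V] [InnerProductSpace ℝ V]
    (T : V →L[ℝ] V) : V →L[ℝ] V :=
  (1 - T) * Ring.inverse (1 + T)

theorem ContinuousLinearMap.norm_lt_one_iff_forall_norm_apply_lt {E F : Type*}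
    [NormedAddCommGroup E] [NormedSpace ℝ E] [FiniteDimensional ℝ E]
    [NormedAddCommGroup F] [NormedSpace ℝ F] (A : E →L[ℝ] F) :
    ‖A‖ < 1 ↔ ∀ x, x ≠ 0 → ‖A x‖ < ‖x‖ := by
  refine ⟨fun hA x hx => ?_, fun hA => ?_⟩
  · calc ‖A x‖ ≤ ‖A‖ * ‖x‖ := A.le_opNorm x
      _ < 1 * ‖x‖ := by gcongr
      _ = ‖x‖ := one_mul _
  rcases subsingleton_or_nontrivial E with hE | hE
  · simp [Subsingleton.elim A 0]
  rw [← A.sSup_sphere_eq_norm, (isCompact_sphere (0 : E) 1).sSup_lt_iff_of_continuous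
    (NormedSpace.sphere_nonempty.mpr zero_le_one) A.continuous.norm.continuousOn]
  intro x hx
  rw [mem_sphere_zero_iff_norm] at hx
  simpa [hx] using hA x (norm_ne_zero_iff.mp (hx ▸ one_ne_zero))

section Cayley

variable {V : Type*} [NormedAddCommGroup V] [InnerProductSpace ℝ V]

theorem norm_one_add_apply_sq_sub_norm_one_sub_apply_sq (T : V →L[ℝ] V) (x : V) :
    ‖(1 + T) x‖ ^ 2 - ‖(1 - T) x‖ ^ 2 = 4 * ⟪T x, x⟫ := by
  rw [add_apply, sub_apply, one_apply_eq_self, norm_add_sq_real, norm_sub_sq_real, real_inner_comm]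
  ring

theorem cayley_apply_one_add_apply {T : V →L[ℝ] V} (hu : IsUnit (1 + T)) (x : V) :
    cayley T ((1 + T) x) = (1 - T) x := by
  rw [cayley, mul_apply_eq_comp, ← mul_apply_eq_comp _ (1 + T), Ring.inverse_mul_cancel _ hu,
    one_apply_eq_self]

theorem isUnit_one_add_of_forall_inner_pos [FiniteDimensional ℝ V] {T : V →L[ℝ] V}
    (hT : ∀ x : V, x ≠ 0 → 0 < ⟪T x, x⟫) : IsUnit (1 + T) := by
  have hinj : Function.Injective (1 + T : V →L[ℝ] V) := by
    refine (injective_iff_map_eq_zero _).mpr fun x hx => ?_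
    by_contra hx0
    have := norm_one_add_apply_sq_sub_norm_one_sub_apply_sq T x
    rw [hx, norm_zero] at this
    nlinarith [hT x hx0, sq_nonneg ‖(1 - T) x‖]
  exact ContinuousLinearMap.isUnit_iff_bijective.mpr
    ⟨hinj, LinearMap.injective_iff_surjective.mp hinj⟩

theorem forall_inner_pos_iff_forall_norm_cayley_apply_lt {T : V →L[ℝ] V}
    (hu : IsUnit (1 + T)) :
    (∀ x : V, x ≠ 0 → 0 < ⟪T x, x⟫) ↔ ∀ y : V, y ≠ 0 → ‖cayley T y‖ < ‖y‖ := by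
  have hbij : Function.Bijective (1 + T : V →L[ℝ] V) :=
    (ContinuousLinearEquiv.unitsEquiv ℝ V hu.unit).bijective
  have hpoint (x : V) : ‖cayley T ((1 + T) x)‖ < ‖(1 + T) x‖ ↔ 0 < ⟪T x, x⟫ := by
    rw [cayley_apply_one_add_apply hu, ← sq_lt_sq₀ (norm_nonneg _) (norm_nonneg _),
      ← sub_pos, norm_one_add_apply_sq_sub_norm_one_sub_apply_sq, mul_pos_iff_of_pos_left four_pos]
  conv_rhs => rw [hbij.surjective.forall]
  refine forall_congr' fun x => ?_
  rw [hpoint, Ne, ← map_eq_zero_iff _ hbij.injective]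

end Cayley

/-- A linear map `T` on a finite-dimensional real inner product space is positive
(`⟨T x, x⟩ > 0` for all `x ≠ 0`) if and only if `I + T` is invertible and the Cayley transform
`𝒞(T) = (I − T) ∘ (I + T)⁻¹` has operator norm `< 1`. -/
theorem positive_iff_cayley_norm_lt_one {V : Type*} [NormedAddCommGroup V]
    [InnerProductSpace ℝ V] [FiniteDimensional ℝ V] (T : V →L[ℝ] V) :
    ((∀ x : V, x ≠ 0 → 0 < ⟪T x, x⟫) → IsUnit (1 + T) ∧ ‖cayley T‖ < 1) ∧
    ((IsUnit (1 + T) ∧ ‖cayley T‖ < 1) → ∀ x : V, x ≠ 0 → 0 < ⟪T x, x⟫) := by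
  refine ⟨fun hT => ?_, fun ⟨hu, hC⟩ => ?_⟩
  · have hu := isUnit_one_add_of_forall_inner_pos hT
    exact ⟨hu, (cayley T).norm_lt_one_iff_forall_norm_apply_lt.mpr
      ((forall_inner_pos_iff_forall_norm_cayley_apply_lt hu).mp hT)⟩
  · exact (forall_inner_pos_iff_forall_norm_cayley_apply_lt hu).mpr
      ((cayley T).norm_lt_one_iff_forall_norm_apply_lt.mp hC)
end

section
/- Let V be a finite-dimensional real inner product space and let A : V → V be a linear map satisfying λ‖v‖² ≤ ⟨A v, v⟩ for all v ∈ V, for some λ > 0. Set M = ‖𝒞(A)‖, the operator norm of the Cayley transform of A (which is well defined and satisfies M < 1). Then for all v ∈ V, ‖v‖² + ‖A v‖² ≤ 2·((1 + M²)/(1 − M²))·⟨A v, v⟩. -/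
/-!
Writing `u = (1 + A) v`, the Cayley transform maps `u` to `(1 - A) v`, and the polarization
identities give `‖(1 ± A) v‖² = ‖v‖² + ‖A v‖² ± 2⟪A v, v⟫`. Coercivity makes `1 + A` injective,
hence invertible, and `‖(1 - A) v‖² = ‖u‖² - 4⟪A v, v⟫ ≤ (1 - 4λ/K²) ‖u‖²` with `K > ‖1 + A‖`,
so `M < 1`. Finally `‖(1 - A) v‖² ≤ M² ‖(1 + A) v‖²`, expanded by the same identities, is the
distortion inequality after dividing by `1 - M²`.
-/

open scoped RealInnerProductSpace

namespace ContinuousLinearMap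

theorem opNorm_lt_one_of_norm_apply_sq_le {E F : Type*} [NormedAddCommGroup E]
    [NormedSpace ℝ E] [NormedAddCommGroup F] [NormedSpace ℝ F] {T : E →L[ℝ] F} {c : ℝ}
    (hc : c < 1) (hT : ∀ u, ‖T u‖ ^ 2 ≤ c * ‖u‖ ^ 2) : ‖T‖ < 1 := by
  have hc' : max c 0 < 1 := max_lt hc one_pos
  refine (opNorm_le_bound T (Real.sqrt_nonneg _) fun u => ?_).trans_lt
    ((Real.sqrt_lt' one_pos).2 (by rwa [one_pow]))
  rw [← pow_le_pow_iff_left₀ (norm_nonneg _) (by positivity) two_ne_zero, mul_pow,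
    Real.sq_sqrt (le_max_right _ _)]
  exact (hT u).trans (mul_le_mul_of_nonneg_right (le_max_left _ _) (by positivity))

variable {V : Type*} [NormedAddCommGroup V] [InnerProductSpace ℝ V]

theorem norm_one_add_apply_sq (A : V →L[ℝ] V) (v : V) :
    ‖(1 + A) v‖ ^ 2 = ‖v‖ ^ 2 + ‖A v‖ ^ 2 + 2 * ⟪A v, v⟫ := by
  rw [add_apply, one_apply_eq_self, norm_add_sq_real, real_inner_comm]
  ring

theorem norm_one_sub_apply_sq (A : V →L[ℝ] V) (v : V) :
    ‖(1 - A) v‖ ^ 2 = ‖v‖ ^ 2 + ‖A v‖ ^ 2 - 2 * ⟪A v, v⟫ := by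
  rw [sub_apply, one_apply_eq_self, norm_sub_sq_real, real_inner_comm]
  ring

theorem isUnit_one_add_of_inner_nonneg [FiniteDimensional ℝ V] {A : V →L[ℝ] V}
    (hA : ∀ v, 0 ≤ ⟪A v, v⟫) : IsUnit (1 + A) := by
  have hinj : Function.Injective ⇑(1 + A) := by
    refine (injective_iff_map_eq_zero _).2 fun v hv => ?_
    have h := norm_one_add_apply_sq A v
    rw [hv, norm_zero] at h
    have : ‖v‖ ^ 2 = 0 := by nlinarith [hA v, sq_nonneg ‖A v‖]
    simpa using this
  exact isUnit_iff_bijective.2 ⟨hinj, LinearMap.injective_iff_surjective.1 hinj⟩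

theorem cayley_mul_one_add {T : V →L[ℝ] V} (hT : IsUnit (1 + T)) : cayley T * (1 + T) = 1 - T :=
  Ring.inverse_mul_cancel_right _ _ hT

theorem cayley_one_add_apply {T : V →L[ℝ] V} (hT : IsUnit (1 + T)) (v : V) :
    cayley T ((1 + T) v) = (1 - T) v :=
  congrArg (· v) (cayley_mul_one_add hT)

theorem norm_cayley_lt_one {A : V →L[ℝ] V} (hU : IsUnit (1 + A)) {lam : ℝ} (hlam : 0 < lam)
    (hA : ∀ v, lam * ‖v‖ ^ 2 ≤ ⟪A v, v⟫) : ‖cayley A‖ < 1 := by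
  set K := ‖1 + A‖ + 1
  have hK : 0 < K := by positivity
  have hc : 0 < 4 * lam / K ^ 2 := by positivity
  refine opNorm_lt_one_of_norm_apply_sq_le (c := 1 - 4 * lam / K ^ 2) (by linarith) fun u => ?_
  obtain ⟨v, rfl⟩ : ∃ v, (1 + A) v = u :=
    ⟨Ring.inverse (1 + A) u, by rw [← mul_apply_eq_comp, Ring.mul_inverse_cancel _ hU, one_apply_eq_self]⟩
  have hu : ‖(1 + A) v‖ ^ 2 ≤ K ^ 2 * ‖v‖ ^ 2 := by
    rw [← mul_pow]
    gcongr
    exact (le_opNorm _ _).trans (by gcongr; linarith)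
  have hquad : 4 * lam / K ^ 2 * ‖(1 + A) v‖ ^ 2 ≤ 4 * ⟪A v, v⟫ := by
    rw [div_mul_eq_mul_div, div_le_iff₀ (by positivity)]
    nlinarith [hA v]
  rw [cayley_one_add_apply hU, norm_one_sub_apply_sq]
  rw [norm_one_add_apply_sq] at hquad ⊢
  linarith

theorem norm_sq_add_norm_apply_sq_le_of_norm_cayley_lt_one {A : V →L[ℝ] V}
    (hU : IsUnit (1 + A)) (hM : ‖cayley A‖ < 1) (v : V) :
    ‖v‖ ^ 2 + ‖A v‖ ^ 2 ≤
      2 * ((1 + ‖cayley A‖ ^ 2) / (1 - ‖cayley A‖ ^ 2)) * ⟪A v, v⟫ := by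
  set M := ‖cayley A‖
  have hM2 : 0 < 1 - M ^ 2 := by nlinarith [norm_nonneg (cayley A)]
  have hle : ‖(1 - A) v‖ ^ 2 ≤ M ^ 2 * ‖(1 + A) v‖ ^ 2 := by
    rw [← mul_pow, ← cayley_one_add_apply hU]
    gcongr
    exact le_opNorm _ _
  rw [norm_one_sub_apply_sq, norm_one_add_apply_sq] at hle
  rw [mul_div_assoc', div_mul_eq_mul_div, le_div_iff₀ hM2]
  nlinarith

end ContinuousLinearMap

/-- If `A` satisfies the lower ellipticity bound `λ‖v‖² ≤ ⟨A v, v⟩` with `λ > 0`, then its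
Cayley transform is well defined with `M = ‖𝒞(A)‖ < 1`, and
`‖v‖² + ‖A v‖² ≤ 2·((1 + M²)/(1 − M²))·⟨A v, v⟩` for all `v`. -/
theorem distortion_inequality_of_elliptic {V : Type*} [NormedAddCommGroup V]
    [InnerProductSpace ℝ V] [FiniteDimensional ℝ V] (A : V →L[ℝ] V) (lam : ℝ) (hlam : 0 < lam)
    (hA : ∀ v : V, lam * ‖v‖ ^ 2 ≤ ⟪A v, v⟫) :
    IsUnit (1 + A) ∧ ‖cayley A‖ < 1 ∧
      ∀ v : V, ‖v‖ ^ 2 + ‖A v‖ ^ 2 ≤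
        2 * ((1 + ‖cayley A‖ ^ 2) / (1 - ‖cayley A‖ ^ 2)) * ⟪A v, v⟫ := by
  have hU : IsUnit (1 + A) :=
    ContinuousLinearMap.isUnit_one_add_of_inner_nonneg fun v => (by positivity : 0 ≤ lam * ‖v‖ ^ 2).trans (hA v)
  have hM : ‖cayley A‖ < 1 := ContinuousLinearMap.norm_cayley_lt_one hU hlam hA
  exact ⟨hU, hM, ContinuousLinearMap.norm_sq_add_norm_apply_sq_le_of_norm_cayley_lt_one hU hM⟩
end

section
/- Let V be a finite-dimensional real inner product space and let T : V → V be an invertible linear map that is normal (T ∘ T* = T* ∘ T) and such that I + T is invertible. Then I + T⁻¹ is invertible and 𝒞(T⁻¹) = −𝒞(T). -/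
/-! The statement is pure ring theory: `1 ± a⁻¹ = a⁻¹ (a ± 1)`, and `a` commutes with
`(1 + a)⁻¹`, so `(1 - a⁻¹)(1 + a⁻¹)⁻¹ = a⁻¹ (a - 1)(1 + a)⁻¹ a = (a - 1)(1 + a)⁻¹`. -/

open scoped Ring

theorem Commute.self_ringInverse {M₀ : Type*} [MonoidWithZero M₀] (a : M₀) :
    Commute a a⁻¹ʳ := by
  by_cases ha : IsUnit a
  · exact (Ring.mul_inverse_cancel a ha).trans (Ring.inverse_mul_cancel a ha).symm
  · rw [Ring.inverse_non_unit a ha]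
    exact .zero_right a

section Ring

variable {R : Type*} [Ring R] {a : R}

theorem one_add_ringInverse (ha : IsUnit a) : 1 + a⁻¹ʳ = a⁻¹ʳ * (1 + a) := by
  rw [mul_add, mul_one, Ring.inverse_mul_cancel a ha, add_comm]

theorem one_sub_ringInverse (ha : IsUnit a) : 1 - a⁻¹ʳ = a⁻¹ʳ * (a - 1) := by
  rw [mul_sub, mul_one, Ring.inverse_mul_cancel a ha]

theorem IsUnit.one_add_ringInverse (ha : IsUnit a) (h1a : IsUnit (1 + a)) :
    IsUnit (1 + a⁻¹ʳ) := by
  rw [_root_.one_add_ringInverse ha]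
  exact ha.ringInverse.mul h1a

theorem ringInverse_one_add_ringInverse (ha : IsUnit a) :
    (1 + a⁻¹ʳ)⁻¹ʳ = (1 + a)⁻¹ʳ * a := by
  rw [one_add_ringInverse ha, Ring.inverse_mul (.inl ha.ringInverse), Ring.inverse_inverse ha]

theorem Commute.ringInverse_one_add (a : R) : Commute a (1 + a)⁻¹ʳ := by
  simpa using (Commute.self_ringInverse (1 + a)).sub_left (.one_left _)

theorem one_sub_ringInverse_mul_ringInverse_one_add_ringInverse (ha : IsUnit a) :
    (1 - a⁻¹ʳ) * (1 + a⁻¹ʳ)⁻¹ʳ = -((1 - a) * (1 + a)⁻¹ʳ) := by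
  rw [one_sub_ringInverse ha, ringInverse_one_add_ringInverse ha, ← neg_mul, neg_sub]
  calc a⁻¹ʳ * (a - 1) * ((1 + a)⁻¹ʳ * a) = a⁻¹ʳ * ((a - 1) * (1 + a)⁻¹ʳ * a) := by noncomm_ring
    _ = a⁻¹ʳ * (a * ((a - 1) * (1 + a)⁻¹ʳ)) := by
      rw [((Commute.refl a).sub_right (.one_right a) |>.mul_right (.ringInverse_one_add a)).eq]
    _ = (a - 1) * (1 + a)⁻¹ʳ := Ring.inverse_mul_cancel_left a _ ha

end Ring

theorem cayley_ringInverse {V : Type*} [NormedAddCommGroup V] [InnerProductSpace ℝ V]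
    {T : V →L[ℝ] V} (hT : IsUnit T) : cayley T⁻¹ʳ = -cayley T :=
  one_sub_ringInverse_mul_ringInverse_one_add_ringInverse hT

theorem cayley_inverse_eq_neg_cayley_general {V : Type*} [NormedAddCommGroup V]
    [InnerProductSpace ℝ V] (T : V →L[ℝ] V) (hT : IsUnit T)
    (h1T : IsUnit (1 + T)) :
    IsUnit (1 + Ring.inverse T) ∧ cayley (Ring.inverse T) = -cayley T :=
  ⟨hT.one_add_ringInverse h1T, cayley_ringInverse hT⟩

/-- If `T` is invertible, normal, and `I + T` is invertible, then `I + T⁻¹` is invertible and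
`𝒞(T⁻¹) = −𝒞(T)`. -/
theorem cayley_inverse_eq_neg_cayley {V : Type*} [NormedAddCommGroup V]
    [InnerProductSpace ℝ V] [FiniteDimensional ℝ V] (T : V →L[ℝ] V) (hT : IsUnit T)
    (hnormal : T * ContinuousLinearMap.adjoint T = ContinuousLinearMap.adjoint T * T)
    (h1T : IsUnit (1 + T)) :
    IsUnit (1 + Ring.inverse T) ∧ cayley (Ring.inverse T) = -cayley T :=
  cayley_inverse_eq_neg_cayley_general T hT h1T
end

section
/- Let f : ℝⁿ → ℝⁿ be continuous and monotone, i.e. ⟨f(ξ) − f(ζ), ξ − ζ⟩ ≥ 0 for all ξ, ζ ∈ ℝⁿ. Then the map T(ξ) := ξ + f(ξ) is a homeomorphism of ℝⁿ onto ℝⁿ. -/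
/-!
Monotonicity of `f` gives `‖x - y‖ ^ 2 ≤ ⟪T x - T y, x - y⟫` for `T x = x + f x`, so `T` is
injective, expands distances and is proper, hence closed; only surjectivity needs work.
When `f` is `C¹`, its derivative is monotone as well, so `DT x` is injective, and by the inverse
function theorem the range of `T` is open; being also closed, it is the whole space.
In general, the mollifications `φₖ ⋆ f` are smooth and monotone, the solutions of
`xₖ + (φₖ ⋆ f) xₖ = y` stay bounded, and any limit point of them solves `x + f x = y`.
-/
open scoped RealInnerProductSpace

open Filter Function Set Metric Topology MeasureTheory ContinuousLinearMap
open scoped Convolution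

variable {E : Type*} [NormedAddCommGroup E] [InnerProductSpace ℝ E]

def IsMonotoneOperator (f : E → E) : Prop :=
  ∀ x y, 0 ≤ ⟪f x - f y, x - y⟫

namespace IsMonotoneOperator

variable {f : E → E}

theorem norm_sub_sq_le_inner (hf : IsMonotoneOperator f) (x y : E) :
    ‖x - y‖ ^ 2 ≤ ⟪(x + f x) - (y + f y), x - y⟫ := by
  have : (x + f x) - (y + f y) = (x - y) + (f x - f y) := by abel
  rw [this, inner_add_left, real_inner_self_eq_norm_sq]
  linarith [hf x y]

theorem norm_sub_le_norm_id_add_sub (hf : IsMonotoneOperator f) (x y : E) :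
    ‖x - y‖ ≤ ‖(x + f x) - (y + f y)‖ := by
  have h := (hf.norm_sub_sq_le_inner x y).trans (real_inner_le_norm _ _)
  rcases (norm_nonneg (x - y)).eq_or_lt with h0 | h0
  · rw [← h0]; exact norm_nonneg _
  · nlinarith

theorem antilipschitzWith_id_add (hf : IsMonotoneOperator f) :
    AntilipschitzWith 1 fun x => x + f x :=
  AntilipschitzWith.of_le_mul_dist fun x y => by
    simpa [dist_eq_norm] using hf.norm_sub_le_norm_id_add_sub x y

theorem isProperMap_id_add [ProperSpace E] (hf : IsMonotoneOperator f) (hc : Continuous f) :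
    IsProperMap fun x => x + f x := by
  refine isProperMap_iff_tendsto_cocompact.2 ⟨continuous_id.add hc, ?_⟩
  simpa only [← Metric.cobounded_eq_cocompact] using hf.antilipschitzWith_id_add.tendsto_cobounded

theorem inner_fderiv_apply_self_nonneg (hf : IsMonotoneOperator f) {f' : E →L[ℝ] E} {x : E}
    (hd : HasFDerivAt f f' x) (v : E) : 0 ≤ ⟪v, f' v⟫ := by
  have hline : HasDerivAt (fun s : ℝ => ⟪v, f (x + s • v)⟫) ⟪v, f' v⟫ 0 := by
    have hpath : HasDerivAt (fun s : ℝ => x + s • v) v 0 := by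
      simpa using ((hasDerivAt_id (0 : ℝ)).smul_const v).const_add x
    exact (innerSL ℝ v).hasFDerivAt.comp_hasDerivAt 0
      ((by simpa using hd : HasFDerivAt f f' (x + (0 : ℝ) • v)).comp_hasDerivAt 0 hpath)
  refine hline.nonneg_of_monotone fun s t hst => ?_
  have h := hf (x + t • v) (x + s • v)
  rw [add_sub_add_left_eq_sub, ← sub_smul, real_inner_smul_right, real_inner_comm,
    inner_sub_right] at h
  rcases hst.eq_or_lt with rfl | hlt
  · rfl
  · linarith [nonneg_of_mul_nonneg_right h (sub_pos.2 hlt)]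

theorem surjective_id_add_of_contDiff [FiniteDimensional ℝ E] (hf : IsMonotoneOperator f)
    (hc : ContDiff ℝ 1 f) : Surjective fun x => x + f x := by
  have hclosed : IsClosed (range fun x => x + f x) :=
    (hf.isProperMap_id_add hc.continuous).isClosedMap.isClosed_range
  have hopen : IsOpen (range fun x => x + f x) := by
    refine isOpen_iff_mem_nhds.2 ?_
    rintro _ ⟨x, rfl⟩
    set L : E →L[ℝ] E := ContinuousLinearMap.id ℝ E + fderiv ℝ f x
    have hd : HasStrictFDerivAt (fun x => x + f x) L x :=
      (hasStrictFDerivAt_id x).add (hc.contDiffAt.hasStrictFDerivAt one_ne_zero)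
    have hinj : Injective L := by
      refine (injective_iff_map_eq_zero _).2 fun v hv => ?_
      have hv' : fderiv ℝ f x v = -v := eq_neg_of_add_eq_zero_right hv
      have h := hf.inner_fderiv_apply_self_nonneg (hc.differentiable one_ne_zero x).hasFDerivAt v
      rw [hv', inner_neg_right, real_inner_self_eq_norm_sq] at h
      simpa using h
    have hsurj : Surjective L := LinearMap.injective_iff_surjective (f := (L : E →ₗ[ℝ] E)).1 hinj
    rw [← hd.map_nhds_eq_of_surj (LinearMap.range_eq_top.2 hsurj)]
    exact range_mem_map
  exact range_eq_univ.1 <| IsClopen.eq_univ ⟨hclosed, hopen⟩ (range_nonempty _)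

theorem surjective_id_add_of_tendsto [ProperSpace E] {g : ℕ → E → E}
    (hg : ∀ k, IsMonotoneOperator (g k)) (hsurj : ∀ k, Surjective fun x => x + g k x)
    (hlim : ∀ a, Tendsto (uncurry g) (atTop ×ˢ 𝓝 a) (𝓝 (f a))) :
    Surjective fun x => x + f x := by
  intro y
  choose x hx using fun k => hsurj k y
  simp only at hx
  obtain ⟨C, hC⟩ : ∃ C, ∀ k, ‖g k 0‖ ≤ C := by
    have h0 : Tendsto (fun k => g k 0) atTop (𝓝 (f 0)) :=
      (hlim 0).comp (tendsto_id.prodMk tendsto_const_nhds)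
    obtain ⟨C, hC⟩ := h0.norm.bddAbove_range
    exact ⟨C, fun k => hC ⟨k, rfl⟩⟩
  have hbdd : ∀ k, x k ∈ closedBall 0 (‖y‖ + C) := fun k => by
    have h := (hg k).norm_sub_le_norm_id_add_sub (x k) 0
    rw [hx k, zero_add, sub_zero] at h
    rw [mem_closedBall_zero_iff]
    linarith [norm_sub_le y (g k 0), hC k]
  obtain ⟨a, -, σ, hσ, hxa⟩ := tendsto_subseq_of_bounded isBounded_closedBall hbdd
  have hga : Tendsto (fun j => g (σ j) (x (σ j))) atTop (𝓝 (f a)) :=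
    (hlim a).comp (hσ.tendsto_atTop.prodMk hxa)
  refine ⟨a, tendsto_nhds_unique (hxa.add hga) ?_⟩
  simp only [Function.comp_def, hx, tendsto_const_nhds]

theorem convolution [FiniteDimensional ℝ E] [MeasurableSpace E] [BorelSpace E] {μ : Measure E}
    [μ.IsAddHaarMeasure] (hf : IsMonotoneOperator f) (hc : Continuous f)
    (φ : ContDiffBump (0 : E)) : IsMonotoneOperator (φ.normed μ ⋆[lsmul ℝ ℝ, μ] f) := by
  intro x z
  have hint : ∀ x, Integrable (fun t => φ.normed μ t • f (x - t)) μ := fun x =>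
    (φ.continuous_normed.smul (by fun_prop)).integrable_of_hasCompactSupport
      φ.hasCompactSupport_normed.smul_right
  simp only [convolution_def, lsmul_apply]
  have hdiff : Integrable (fun t => φ.normed μ t • f (x - t) - φ.normed μ t • f (z - t)) μ :=
    (hint x).sub (hint z)
  rw [← integral_sub (hint x) (hint z), real_inner_comm, ← integral_inner hdiff]
  refine integral_nonneg fun t => ?_
  have h := hf (x - t) (z - t)
  rw [sub_sub_sub_cancel_right] at h
  simpa only [Pi.zero_apply, ← smul_sub, real_inner_smul_right, real_inner_comm]
    using mul_nonneg (φ.nonneg_normed t) h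

theorem surjective_id_add [FiniteDimensional ℝ E] (hf : IsMonotoneOperator f) (hc : Continuous f) :
    Surjective fun x => x + f x := by
  borelize E
  let μ : Measure E := Measure.addHaar
  let φ : ℕ → ContDiffBump (0 : E) := fun k =>
    ⟨1 / (k + 1) / 2, 1 / (k + 1), by positivity, half_lt_self (by positivity)⟩
  have hφ : Tendsto (fun k => (φ k).rOut) atTop (𝓝 0) := tendsto_one_div_add_atTop_nhds_zero_nat
  refine surjective_id_add_of_tendsto (g := fun k => (φ k).normed μ ⋆[lsmul ℝ ℝ, μ] f)
    (fun k => hf.convolution hc (φ k))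
    (fun k => (hf.convolution hc (φ k)).surjective_id_add_of_contDiff ?_) fun a => ?_
  · exact (φ k).hasCompactSupport_normed.contDiff_convolution_left _ (φ k).contDiff_normed
      hc.locallyIntegrable
  · exact ContDiffBump.convolution_tendsto_right (φ := fun i : ℕ × E => φ i.1)
      (hφ.comp tendsto_fst) (Eventually.of_forall fun _ => hc.aestronglyMeasurable)
      ((hc.tendsto a).comp tendsto_snd) tendsto_snd

theorem isHomeomorph_id_add [FiniteDimensional ℝ E] (hf : IsMonotoneOperator f)
    (hc : Continuous f) : IsHomeomorph fun x => x + f x :=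
  isHomeomorph_iff_continuous_isClosedMap_bijective.2
    ⟨continuous_id.add hc, (hf.isProperMap_id_add hc).isClosedMap,
      hf.antilipschitzWith_id_add.injective, hf.surjective_id_add hc⟩

end IsMonotoneOperator

/-- If `f : ℝⁿ → ℝⁿ` is continuous and monotone, i.e. `⟨f ξ − f ζ, ξ − ζ⟩ ≥ 0` for all `ξ, ζ`,
then `T ξ := ξ + f ξ` is a homeomorphism of `ℝⁿ` onto `ℝⁿ`. -/
theorem isHomeomorph_add_of_monotone {n : ℕ}
    (f : EuclideanSpace ℝ (Fin n) → EuclideanSpace ℝ (Fin n)) (hf : Continuous f)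
    (hmono : ∀ ξ ζ : EuclideanSpace ℝ (Fin n), 0 ≤ ⟪f ξ - f ζ, ξ - ζ⟫) :
    IsHomeomorph (fun ξ : EuclideanSpace ℝ (Fin n) => ξ + f ξ) :=
  IsMonotoneOperator.isHomeomorph_id_add hmono hf
end

section
/- Let K ≥ 2 and let A : ℝⁿ → ℝⁿ be a continuous map with A(0) = 0 satisfying the uniform ellipticity bound ‖ξ − ζ‖² + ‖A(ξ) − A(ζ)‖² ≤ K·⟨A(ξ) − A(ζ), ξ − ζ⟩ for all ξ, ζ ∈ ℝⁿ. Then the map ξ ↦ ξ + A(ξ) is a homeomorphism of ℝⁿ, and the nonlinear Cayley transform ℳ := (id − A) ∘ (id + A)⁻¹ satisfies ℳ(0) = 0 and is Lipschitz continuous with Lipschitz constant √((K − 2)/(K + 2)): ‖ℳ(ζ₁) − ℳ(ζ₂)‖ ≤ √((K−2)/(K+2))·‖ζ₁ − ζ₂‖ for all ζ₁, ζ₂ ∈ ℝⁿ. -/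
/-!
Put `x = ξ - ζ` and `a = A ξ - A ζ`. The ellipticity bound makes `A` monotone and `K`-Lipschitz,
so `id + A` is strongly monotone and Lipschitz. Strong monotonicity makes it antilipschitz, and
for a small step `t > 0` the map `ξ ↦ ξ - t (ξ + A ξ - z)` is a contraction whose fixed point
solves `ξ + A ξ = z`; hence `id + A` is a homeomorphism. Finally
`(K + 2) ‖x - a‖² - (K - 2) ‖x + a‖² = 4 (‖x‖² + ‖a‖² - K ⟪a, x⟫) ≤ 0`,
so the Cayley transform, which sends `x + a` to `x - a`, is `√((K - 2) / (K + 2))`-Lipschitz.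
-/

open scoped NNReal RealInnerProductSpace

section StronglyMonotone

variable {E : Type*} [NormedAddCommGroup E] [InnerProductSpace ℝ E]

def IsStronglyMonotone (m : ℝ≥0) (F : E → E) : Prop :=
  ∀ x y, m * ‖x - y‖ ^ 2 ≤ ⟪F x - F y, x - y⟫

theorem isStronglyMonotone_id : IsStronglyMonotone 1 (id : E → E) := fun x y => by simp

theorem IsStronglyMonotone.add {m m' : ℝ≥0} {F G : E → E} (hF : IsStronglyMonotone m F)
    (hG : IsStronglyMonotone m' G) : IsStronglyMonotone (m + m') (F + G) := fun x y => by
  have hsub : (F + G) x - (F + G) y = (F x - F y) + (G x - G y) := by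
    simp only [Pi.add_apply]; abel
  rw [hsub, inner_add_left, NNReal.coe_add, add_mul]
  exact add_le_add (hF x y) (hG x y)

theorem IsStronglyMonotone.antilipschitzWith {m : ℝ≥0} {F : E → E} (hF : IsStronglyMonotone m F)
    (hm : 0 < m) : AntilipschitzWith m⁻¹ F :=
  AntilipschitzWith.of_le_mul_dist fun x y => by
    rw [dist_eq_norm, dist_eq_norm, NNReal.coe_inv, ← div_eq_inv_mul,
      le_div_iff₀ (NNReal.coe_pos.2 hm)]
    rcases (norm_nonneg (x - y)).eq_or_lt with hxy | hxy
    · rw [← hxy, zero_mul]; exact norm_nonneg _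
    · refine le_of_mul_le_mul_right ?_ hxy
      calc ‖x - y‖ * m * ‖x - y‖ = m * ‖x - y‖ ^ 2 := by ring
        _ ≤ ⟪F x - F y, x - y⟫ := hF x y
        _ ≤ ‖F x - F y‖ * ‖x - y‖ := real_inner_le_norm _ _

theorem IsStronglyMonotone.contractingWith_sub_smul {m L : ℝ≥0} {F : E → E}
    (hF : IsStronglyMonotone m F) (hm : 0 < m) (hFL : LipschitzWith L F) (hL : 0 < L) (z : E) :
    ContractingWith (√(1 - (m / L) ^ 2)).toNNReal (fun x => x - (m / L ^ 2 : ℝ) • (F x - z)) := by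
  set t : ℝ := m / L ^ 2
  have ht : 0 < t := by positivity
  refine ⟨Real.toNNReal_lt_one.2 ?_, LipschitzWith.of_dist_le_mul fun x y => ?_⟩
  · rw [Real.sqrt_lt' one_pos]
    have : 0 < (m / L : ℝ) ^ 2 := by positivity
    linarith
  have hsub : x - t • (F x - z) - (y - t • (F y - z)) = (x - y) - t • (F x - F y) := by module
  have hsq : ‖(x - y) - t • (F x - F y)‖ ^ 2 ≤ (1 - (m / L) ^ 2) * ‖x - y‖ ^ 2 := by
    have hlip : ‖F x - F y‖ ^ 2 ≤ L ^ 2 * ‖x - y‖ ^ 2 := by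
      rw [← mul_pow]; gcongr; exact hFL.norm_sub_le x y
    have h1 := mul_le_mul_of_nonneg_left (hF x y) (by positivity : (0 : ℝ) ≤ 2 * t)
    have h2 := mul_le_mul_of_nonneg_left hlip (sq_nonneg t)
    have h3 : 2 * t * (m * ‖x - y‖ ^ 2) = 2 * (m / L) ^ 2 * ‖x - y‖ ^ 2 := by
      simp only [t]; field_simp
    have h4 : t ^ 2 * (L ^ 2 * ‖x - y‖ ^ 2) = (m / L) ^ 2 * ‖x - y‖ ^ 2 := by
      simp only [t]; field_simp
    rw [norm_sub_sq_real, real_inner_smul_right, norm_smul, Real.norm_of_nonneg ht.le, mul_pow,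
      real_inner_comm]
    linarith
  rw [dist_eq_norm, dist_eq_norm, Real.coe_toNNReal _ (Real.sqrt_nonneg _), hsub,
    ← Real.sqrt_sq (norm_nonneg _), ← Real.sqrt_sq (norm_nonneg (x - y)),
    ← Real.sqrt_mul' _ (sq_nonneg _)]
  exact Real.sqrt_le_sqrt hsq

theorem IsStronglyMonotone.surjective [CompleteSpace E] {m L : ℝ≥0} {F : E → E}
    (hF : IsStronglyMonotone m F) (hm : 0 < m) (hFL : LipschitzWith L F) (hL : 0 < L) :
    Function.Surjective F := fun z => by
  have hT := hF.contractingWith_sub_smul hm hFL hL z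
  refine ⟨ContractingWith.fixedPoint _ hT, ?_⟩
  have hfix : (m / L ^ 2 : ℝ) • (F _ - z) = 0 := sub_eq_self.1 hT.fixedPoint_isFixedPt
  simpa [hm.ne', hL.ne', sub_eq_zero] using hfix

end StronglyMonotone

section Elliptic

variable {E : Type*} [NormedAddCommGroup E] [InnerProductSpace ℝ E] {K : ℝ} {x a : E}

theorem inner_nonneg_of_elliptic (hK : 0 < K) (h : ‖x‖ ^ 2 + ‖a‖ ^ 2 ≤ K * ⟪a, x⟫) :
    0 ≤ ⟪a, x⟫ :=
  (mul_nonneg_iff_of_pos_left hK).1 ((add_nonneg (sq_nonneg _) (sq_nonneg _)).trans h)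

theorem norm_le_mul_norm_of_elliptic (hK : 0 ≤ K) (h : ‖x‖ ^ 2 + ‖a‖ ^ 2 ≤ K * ⟪a, x⟫) :
    ‖a‖ ≤ K * ‖x‖ := by
  rcases (norm_nonneg a).eq_or_lt with ha | ha
  · rw [← ha]; positivity
  · refine le_of_mul_le_mul_right ?_ ha
    calc ‖a‖ * ‖a‖ ≤ ‖x‖ ^ 2 + ‖a‖ ^ 2 := by rw [← sq]; exact le_add_of_nonneg_left (sq_nonneg _)
      _ ≤ K * ⟪a, x⟫ := h
      _ ≤ K * (‖a‖ * ‖x‖) := mul_le_mul_of_nonneg_left (real_inner_le_norm a x) hK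
      _ = K * ‖x‖ * ‖a‖ := by ring

theorem norm_sub_le_of_elliptic (hK : 0 < K + 2) (h : ‖x‖ ^ 2 + ‖a‖ ^ 2 ≤ K * ⟪a, x⟫) :
    ‖x - a‖ ≤ √((K - 2) / (K + 2)) * ‖x + a‖ := by
  have hsq : ‖x - a‖ ^ 2 ≤ (K - 2) / (K + 2) * ‖x + a‖ ^ 2 := by
    rw [div_mul_eq_mul_div, le_div_iff₀ hK, norm_sub_sq_real, norm_add_sq_real, real_inner_comm]
    linarith
  rw [← Real.sqrt_sq (norm_nonneg (x - a)), ← Real.sqrt_sq (norm_nonneg (x + a)),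
    ← Real.sqrt_mul' _ (sq_nonneg _)]
  exact Real.sqrt_le_sqrt hsq

end Elliptic

theorem nonlinear_cayley_lipschitz_general {n : ℕ} (K : ℝ) (hK : 2 ≤ K)
    (A : EuclideanSpace ℝ (Fin n) → EuclideanSpace ℝ (Fin n))
    (hA0 : A 0 = 0)
    (hell : ∀ ξ ζ : EuclideanSpace ℝ (Fin n),
      ‖ξ - ζ‖ ^ 2 + ‖A ξ - A ζ‖ ^ 2 ≤ K * ⟪A ξ - A ζ, ξ - ζ⟫) :
    ∃ h : EuclideanSpace ℝ (Fin n) ≃ₜ EuclideanSpace ℝ (Fin n),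
      (∀ ξ : EuclideanSpace ℝ (Fin n), h ξ = ξ + A ξ) ∧
      (h.symm 0 - A (h.symm 0) = 0) ∧
      (∀ ζ₁ ζ₂ : EuclideanSpace ℝ (Fin n),
        ‖(h.symm ζ₁ - A (h.symm ζ₁)) - (h.symm ζ₂ - A (h.symm ζ₂))‖ ≤
          Real.sqrt ((K - 2) / (K + 2)) * ‖ζ₁ - ζ₂‖) := by
  have hK0 : 0 < K := by linarith
  have hAmono : IsStronglyMonotone 0 A := fun ξ ζ => by
    simpa using inner_nonneg_of_elliptic hK0 (hell ξ ζ)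
  have hALip : LipschitzWith K.toNNReal A := LipschitzWith.of_dist_le_mul fun ξ ζ => by
    simpa [dist_eq_norm, hK0.le] using norm_le_mul_norm_of_elliptic hK0.le (hell ξ ζ)
  have hFmono : IsStronglyMonotone 1 (id + A) := by
    simpa using isStronglyMonotone_id.add hAmono
  have hFLip : LipschitzWith (1 + K.toNNReal) (id + A) := LipschitzWith.id.add hALip
  let h := ((hFmono.antilipschitzWith one_pos).isEmbedding hFLip.continuous)
    |>.toHomeomorphOfSurjective (hFmono.surjective one_pos hFLip (by positivity))
  have hh (ξ) : h ξ = ξ + A ξ := rfl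
  refine ⟨h, hh, ?_, fun ζ₁ ζ₂ => ?_⟩
  · have h0 : h.symm 0 = 0 := h.symm_apply_eq.2 (by simp [hh, hA0])
    rw [h0, hA0, sub_zero]
  · obtain ⟨ξ₁, rfl⟩ := h.surjective ζ₁
    obtain ⟨ξ₂, rfl⟩ := h.surjective ζ₂
    rw [h.symm_apply_apply, h.symm_apply_apply, hh, hh, sub_sub_sub_comm, add_sub_add_comm]
    exact norm_sub_le_of_elliptic (by linarith) (hell ξ₁ ξ₂)

/-- Let `K ≥ 2` and let `A : ℝⁿ → ℝⁿ` be continuous with `A 0 = 0` satisfying the uniform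
ellipticity bound `‖ξ − ζ‖² + ‖A ξ − A ζ‖² ≤ K·⟨A ξ − A ζ, ξ − ζ⟩`. Then `ξ ↦ ξ + A ξ` is a
homeomorphism `h` of `ℝⁿ`, and the nonlinear Cayley transform
`ℳ = (id − A) ∘ (id + A)⁻¹`, i.e. `ℳ ζ = h.symm ζ − A (h.symm ζ)`, satisfies `ℳ 0 = 0` and
is Lipschitz with constant `√((K − 2)/(K + 2))`. -/
theorem nonlinear_cayley_lipschitz {n : ℕ} (K : ℝ) (hK : 2 ≤ K)
    (A : EuclideanSpace ℝ (Fin n) → EuclideanSpace ℝ (Fin n)) (hA : Continuous A)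
    (hA0 : A 0 = 0)
    (hell : ∀ ξ ζ : EuclideanSpace ℝ (Fin n),
      ‖ξ - ζ‖ ^ 2 + ‖A ξ - A ζ‖ ^ 2 ≤ K * ⟪A ξ - A ζ, ξ - ζ⟫) :
    ∃ h : EuclideanSpace ℝ (Fin n) ≃ₜ EuclideanSpace ℝ (Fin n),
      (∀ ξ : EuclideanSpace ℝ (Fin n), h ξ = ξ + A ξ) ∧
      (h.symm 0 - A (h.symm 0) = 0) ∧
      (∀ ζ₁ ζ₂ : EuclideanSpace ℝ (Fin n),
        ‖(h.symm ζ₁ - A (h.symm ζ₁)) - (h.symm ζ₂ - A (h.symm ζ₂))‖ ≤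
          Real.sqrt ((K - 2) / (K + 2)) * ‖ζ₁ - ζ₂‖) :=
  nonlinear_cayley_lipschitz_general K hK A hA0 hell
end

section
/- Let V be a finite-dimensional real inner product space, let K ≥ 1 be a real number, and let A : V → V be a self-adjoint linear map. Then the two-sided ellipticity bounds K⁻¹‖v‖² ≤ ⟨A v, v⟩ ≤ K‖v‖² hold for all v ∈ V if and only if the one-sided inequality ‖v‖² + ‖A v‖² ≤ (K + K⁻¹)·⟨A v, v⟩ holds for all v ∈ V. -/
/-!
With `s = K + K⁻¹`, the identity `(c - K t) (c - K⁻¹ t) = t² + c² - s c t` shows that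
`K⁻¹ t ≤ c ≤ K t` iff `t² + c² ≤ s c t` (for `t ≥ 0`). In an orthonormal eigenbasis of `A` the
form `s ⟪A v, v⟫ - ‖v‖² - ‖A v‖²` is a sum of `(s μ - 1 - μ²) xᵢ²`, and the two-sided bounds
put every eigenvalue `μ` in `[K⁻¹, K]`, where the coefficient is nonnegative. Conversely, with
`t = ‖v‖²` and `c = ⟪A v, v⟫`, multiplying the one-sided bound by `t` and using Cauchy–Schwarz
`c² ≤ t ‖A v‖²` gives `t² + c² ≤ s c t` for each `v` separately.
-/

open scoped RealInnerProductSpace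

open Module.End

lemma mem_Icc_iff_sq_add_sq_le {K t c : ℝ} (hK : 1 ≤ K) (ht : 0 ≤ t) :
    K⁻¹ * t ≤ c ∧ c ≤ K * t ↔ t ^ 2 + c ^ 2 ≤ (K + K⁻¹) * c * t := by
  have hKK : K * K⁻¹ = 1 := mul_inv_cancel₀ (by positivity)
  have hKinv : K⁻¹ ≤ K := (inv_le_one_of_one_le₀ hK).trans hK
  have hfactor : (c - K * t) * (c - K⁻¹ * t) = c ^ 2 + t ^ 2 - (K + K⁻¹) * c * t := by
    linear_combination t ^ 2 * hKK
  have hends : K⁻¹ * t ≤ K * t := mul_le_mul_of_nonneg_right hKinv ht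
  constructor
  · rintro ⟨hlow, hhigh⟩
    nlinarith [mul_nonneg (sub_nonneg.2 hhigh) (sub_nonneg.2 hlow)]
  · intro h
    constructor <;> nlinarith

section

variable {V : Type*} [NormedAddCommGroup V] [InnerProductSpace ℝ V]

lemma Module.End.HasEigenvalue.mem_Icc_of_forall_inner_map_self {T : V →ₗ[ℝ] V} {α β μ : ℝ}
    (hbounds : ∀ v, α * ‖v‖ ^ 2 ≤ ⟪T v, v⟫ ∧ ⟪T v, v⟫ ≤ β * ‖v‖ ^ 2)
    (hμ : HasEigenvalue T μ) : α ≤ μ ∧ μ ≤ β := by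
  obtain ⟨x, hx, hx0⟩ := hμ.exists_hasEigenvector
  have hTx : ⟪T x, x⟫ = μ * ‖x‖ ^ 2 := by
    rw [mem_genEigenspace_one.mp hx, real_inner_smul_left, real_inner_self_eq_norm_sq]
  have hpos : 0 < ‖x‖ ^ 2 := by positivity
  obtain ⟨hlow, hhigh⟩ := hbounds x
  rw [hTx] at hlow hhigh
  exact ⟨le_of_mul_le_mul_right hlow hpos, le_of_mul_le_mul_right hhigh hpos⟩

namespace LinearMap.IsSymmetric

variable [FiniteDimensional ℝ V] {T : V →ₗ[ℝ] V}

lemma inner_eigenvectorBasis_map (hT : T.IsSymmetric) {n : ℕ} (hn : Module.finrank ℝ V = n)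
    (i : Fin n) (v : V) :
    ⟪hT.eigenvectorBasis hn i, T v⟫ = hT.eigenvalues hn i * ⟪hT.eigenvectorBasis hn i, v⟫ := by
  rw [← hT, apply_eigenvectorBasis, RCLike.ofReal_real_eq_id, id_eq, real_inner_smul_left]

lemma quadratic_form_eq_sum (hT : T.IsSymmetric) {n : ℕ} (hn : Module.finrank ℝ V = n)
    (a b c : ℝ) (v : V) :
    a * ‖v‖ ^ 2 + b * ⟪T v, v⟫ + c * ‖T v‖ ^ 2 =
      ∑ i, (a + b * hT.eigenvalues hn i + c * hT.eigenvalues hn i ^ 2) *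
        ⟪hT.eigenvectorBasis hn i, v⟫ ^ 2 := by
  set e := hT.eigenvectorBasis hn
  have hinner : ⟪T v, v⟫ = ∑ i, hT.eigenvalues hn i * ⟪e i, v⟫ ^ 2 := by
    rw [← e.sum_inner_mul_inner]
    refine Finset.sum_congr rfl fun i _ => ?_
    rw [real_inner_comm, hT.inner_eigenvectorBasis_map]
    ring
  have hnorm : ‖T v‖ ^ 2 = ∑ i, hT.eigenvalues hn i ^ 2 * ⟪e i, v⟫ ^ 2 := by
    rw [← e.sum_sq_inner_right]
    refine Finset.sum_congr rfl fun i _ => ?_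
    rw [hT.inner_eigenvectorBasis_map]
    ring
  rw [← e.sum_sq_inner_right v, hinner, hnorm, Finset.mul_sum, Finset.mul_sum, Finset.mul_sum,
    ← Finset.sum_add_distrib, ← Finset.sum_add_distrib]
  exact Finset.sum_congr rfl fun i _ => by ring

lemma quadratic_form_nonneg (hT : T.IsSymmetric) {a b c : ℝ}
    (hspec : ∀ μ, HasEigenvalue T μ → 0 ≤ a + b * μ + c * μ ^ 2) (v : V) :
    0 ≤ a * ‖v‖ ^ 2 + b * ⟪T v, v⟫ + c * ‖T v‖ ^ 2 := by
  rw [hT.quadratic_form_eq_sum rfl]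
  exact Finset.sum_nonneg fun i _ =>
    mul_nonneg (hspec _ (hT.hasEigenvalue_eigenvalues rfl i)) (sq_nonneg _)

end LinearMap.IsSymmetric

end

/-- For a self-adjoint linear map `A` on a finite-dimensional real inner product space and
`K ≥ 1`, the two-sided ellipticity bounds `K⁻¹‖v‖² ≤ ⟨A v, v⟩ ≤ K‖v‖²` hold for all `v`
if and only if the one-sided inequality `‖v‖² + ‖A v‖² ≤ (K + K⁻¹)·⟨A v, v⟩` holds for all
`v`. -/
theorem two_sided_iff_one_sided {V : Type*} [NormedAddCommGroup V] [InnerProductSpace ℝ V]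
    [FiniteDimensional ℝ V] (A : V →L[ℝ] V)
    (hsa : ∀ u v : V, ⟪A u, v⟫ = ⟪u, A v⟫) (K : ℝ) (hK : 1 ≤ K) :
    (∀ v : V, K⁻¹ * ‖v‖ ^ 2 ≤ ⟪A v, v⟫ ∧ ⟪A v, v⟫ ≤ K * ‖v‖ ^ 2) ↔
    (∀ v : V, ‖v‖ ^ 2 + ‖A v‖ ^ 2 ≤ (K + K⁻¹) * ⟪A v, v⟫) := by
  constructor
  · intro hbounds v
    have hT : (A : V →ₗ[ℝ] V).IsSymmetric := hsa
    have hspec : ∀ μ, HasEigenvalue (A : V →ₗ[ℝ] V) μ → 0 ≤ -1 + (K + K⁻¹) * μ + -1 * μ ^ 2 :=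
      fun μ hμ => by
        have := (mem_Icc_iff_sq_add_sq_le hK zero_le_one).1
          (by simpa only [mul_one] using hμ.mem_Icc_of_forall_inner_map_self hbounds)
        linarith
    have := hT.quadratic_form_nonneg hspec v
    simp only [ContinuousLinearMap.coe_coe] at this
    linarith
  · intro h v
    have hcs : ⟪A v, v⟫ ^ 2 ≤ ‖v‖ ^ 2 * ‖A v‖ ^ 2 := by
      rw [← mul_pow, mul_comm, ← sq_abs]
      exact pow_le_pow_left₀ (abs_nonneg _) (abs_real_inner_le_norm _ _) 2
    refine (mem_Icc_iff_sq_add_sq_le hK (sq_nonneg ‖v‖)).2 ?_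
    nlinarith [mul_le_mul_of_nonneg_left (h v) (sq_nonneg ‖v‖)]
end
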